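/- Let K̂ denote the switching policy (0, 1, 2, …, N−1, S). Then for every switching policy K one has W_q(K̂) ≤ W_q(K), F(K̂) ≥ F(K), and B(K̂) ≤ B(K); that is, K̂ yields the smallest possible expected waiting time and expected back-room staffing and the largest possible expected front-room staffing among all policies. In particular, if B(K̂) ≥ B_l for a given real B_l, then K̂ minimizes W_q over all policies K satisfying B(K) ≥ B_l. -/

import Mathlib

open Finset

/-- A switching policy: `k 0 ≥ 0`, `k i - k (i-1) ≥ 1` for `1 ≤ i ≤ N`, and `k N = S`. -/
def IsPolicy (N : ℕ) (S : ℤ) (k : ℕ → ℤ) : Prop :=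
  0 ≤ k 0 ∧ (∀ i : ℕ, 1 ≤ i → i ≤ N → 1 ≤ k i - k (i - 1)) ∧ k N = S

/-- `X_i = ∏_{g=1}^{i-1} (1/g)^(k_g - k_{g-1})`. -/
noncomputable def Xcoef (k : ℕ → ℤ) (i : ℕ) : ℝ :=
  ∏ g ∈ Finset.Icc 1 (i - 1), ((1 : ℝ) / (g : ℝ)) ^ (k g - k (g - 1))

/-- `β (k 0) = 1` and, for `1 ≤ i ≤ N` and `k (i-1) + 1 ≤ j ≤ k i`,
`β j = (λ/μ)^(j - k 0) * (1/i)^(j - k (i-1)) * X_i`. -/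
def IsBeta (lam mu : ℝ) (N : ℕ) (k : ℕ → ℤ) (β : ℤ → ℝ) : Prop :=
  β (k 0) = 1 ∧
  ∀ i : ℕ, 1 ≤ i → i ≤ N → ∀ j : ℤ, k (i - 1) + 1 ≤ j → j ≤ k i →
    β j = (lam / mu) ^ (j - k 0) * ((1 : ℝ) / (i : ℝ)) ^ (j - k (i - 1)) * Xcoef k i

/-- Steady-state probabilities `P j = β j / Σ_{m=k 0}^{S} β m`. -/
noncomputable def Pfun (S : ℤ) (k : ℕ → ℤ) (β : ℤ → ℝ) (j : ℤ) : ℝ :=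
  β j / ∑ m ∈ Finset.Icc (k 0) S, β m

/-- Expected number of front-room workers. -/
noncomputable def Fval (N : ℕ) (S : ℤ) (k : ℕ → ℤ) (β : ℤ → ℝ) : ℝ :=
  ∑ i ∈ Finset.Icc 1 N, ∑ j ∈ Finset.Icc (k (i - 1) + 1) (k i), (i : ℝ) * Pfun S k β j

/-- Expected number of back-room workers. -/
noncomputable def Bval (N : ℕ) (S : ℤ) (k : ℕ → ℤ) (β : ℤ → ℝ) : ℝ :=
  (N : ℝ) - Fval N S k β

/-- Expected number of customers in the front room. -/
noncomputable def Lval (S : ℤ) (k : ℕ → ℤ) (β : ℤ → ℝ) : ℝ :=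
  ∑ j ∈ Finset.Icc (k 0) S, (j : ℝ) * Pfun S k β j

/-- Expected waiting time `W_q = L / (λ (1 - P S)) - 1/μ`. -/
noncomputable def Wq (lam mu : ℝ) (S : ℤ) (k : ℕ → ℤ) (β : ℤ → ℝ) : ℝ :=
  Lval S k β / (lam * (1 - Pfun S k β S)) - 1 / mu

/-- The policy `K̂ = (0, 1, …, N-1, S)`. -/
def khat (N : ℕ) (S : ℤ) : ℕ → ℤ := fun i => if i = N then S else (i : ℤ)

/-!
Under any policy the number of customers is a birth–death chain on `k 0, …, S` with arrival
rate `λ` and service rate `i μ` on the `i`-th block, and `β` solves its detailed balance equations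
`i β (j + 1) = (λ / μ) β j`. Summing them gives `F = (λ / μ) (1 - P(S))`. The policy `K̂` runs
`min j N` front-room servers in state `j`, the most any policy can, so with `β` extended by `0`
below `k 0` the ratio `β / β̂` is nondecreasing on `0, …, S`: the stationary law of `K̂` is
smaller in the likelihood-ratio order. A weighted Chebyshev inequality turns this into
`L(K̂) ≤ L(K)` and `P_K̂(S) ≤ P_K(S)`, and all three comparisons follow.
-/

section WeightedChebyshev

variable {ι : Type*} [LinearOrder ι]

theorem sum_mul_sum_le_sum_mul_sum_of_monotoneOn {R : Type*} [CommRing R] [LinearOrder R]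
    [IsStrictOrderedRing R] (s : Finset ι) {f p q : ι → R} (hf : MonotoneOn f s)
    (hpq : ∀ j ∈ s, ∀ m ∈ s, j ≤ m → p j * q m ≤ p m * q j) :
    (∑ i ∈ s, f i * q i) * ∑ i ∈ s, p i ≤ (∑ i ∈ s, f i * p i) * ∑ i ∈ s, q i := by
  let g : ι → ι → R := fun j m => f m * p m * q j - f m * q m * p j
  have hpairs : 0 ≤ ∑ j ∈ s, ∑ m ∈ s, (g j m + g m j) := by
    refine sum_nonneg fun j hj => sum_nonneg fun m hm => ?_
    have hgg : g j m + g m j = (f m - f j) * (p m * q j - p j * q m) := by simp only [g]; ring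
    rw [hgg]
    rcases le_total j m with h | h
    · exact mul_nonneg (sub_nonneg.2 (hf hj hm h)) (sub_nonneg.2 (hpq j hj m hm h))
    · exact mul_nonneg_of_nonpos_of_nonpos (sub_nonpos.2 (hf hm hj h))
        (sub_nonpos.2 (hpq m hm j hj h))
  have hsum : ∑ j ∈ s, ∑ m ∈ s, (g j m + g m j) =
      2 * ((∑ i ∈ s, f i * p i) * ∑ i ∈ s, q i - (∑ i ∈ s, f i * q i) * ∑ i ∈ s, p i) := by
    simp only [sum_add_distrib]
    rw [sum_comm (f := fun j m => g m j), ← two_mul, sum_mul_sum, sum_mul_sum, sum_comm,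
      ← sum_sub_distrib]
    simp only [g, ← sum_sub_distrib]
  rw [hsum] at hpairs
  exact sub_nonneg.1 (nonneg_of_mul_nonneg_right hpairs two_pos)

theorem sum_mul_div_sum_le_of_monotoneOn_div {R : Type*} [Field R] [LinearOrder R]
    [IsStrictOrderedRing R] (s : Finset ι) {f p q : ι → R}
    (hf : MonotoneOn f s) (hq : ∀ i ∈ s, 0 < q i) (hpq : MonotoneOn (fun i => p i / q i) s)
    (hp_sum : 0 < ∑ i ∈ s, p i) :
    (∑ i ∈ s, f i * q i) / ∑ i ∈ s, q i ≤ (∑ i ∈ s, f i * p i) / ∑ i ∈ s, p i := by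
  rw [div_le_div_iff₀ (sum_pos hq (nonempty_of_sum_ne_zero hp_sum.ne')) hp_sum]
  refine sum_mul_sum_le_sum_mul_sum_of_monotoneOn s hf fun j hj m hm hjm => ?_
  exact (div_le_div_iff₀ (hq j hj) (hq m hm)).1 (hpq hj hm hjm)

end WeightedChebyshev

theorem sum_Ico_blocks {α M : Type*} [LinearOrder α] [LocallyFiniteOrder α] [AddCommMonoid M]
    (k : ℕ → α) (g : α → M) {n : ℕ} (hk : ∀ i, 1 ≤ i → i ≤ n → k (i - 1) ≤ k i) :
    ∑ i ∈ Icc 1 n, ∑ j ∈ Ico (k (i - 1)) (k i), g j = ∑ j ∈ Ico (k 0) (k n), g j := by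
  induction n with
  | zero => simp
  | succ n ih =>
    have hmono : ∀ i ≤ n, k 0 ≤ k i := by
      intro i hi
      induction i with
      | zero => exact le_rfl
      | succ i ihi => exact (ihi (by omega)).trans (hk (i + 1) (by omega) (by omega))
    rw [sum_Icc_succ_top (by omega), ih fun i h1 h2 => hk i h1 (by omega), Nat.add_sub_cancel,
      ← sum_union (Ico_disjoint_Ico_consecutive _ _ _),
      Ico_union_Ico_eq_Ico (hmono n le_rfl) (hk (n + 1) (by omega) le_rfl)]

theorem sum_Icc_add_one_eq_sum_Ico {M : Type*} [AddCommMonoid M] (g : ℤ → M) (a b : ℤ) :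
    ∑ j ∈ Icc (a + 1) b, g j = ∑ j ∈ Ico a b, g (j + 1) := by
  rw [sum_Ico_add', Ico_add_one_right_eq_Icc]

namespace IsPolicy

variable {N : ℕ} {S : ℤ} {k : ℕ → ℤ}

theorem add_le (hk : IsPolicy N S k) {i : ℕ} (hi : i ≤ N) : k 0 + i ≤ k i := by
  induction i with
  | zero => simp
  | succ n ih =>
    have hstep := hk.2.1 (n + 1) (by omega) hi
    simp only [Nat.add_sub_cancel] at hstep
    push_cast
    linarith [ih (by omega)]

theorem lt_top (hk : IsPolicy N S k) (hN : 1 ≤ N) : k 0 < S := by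
  have := hk.add_le le_rfl
  rw [hk.2.2] at this
  omega

theorem exists_block (hk : IsPolicy N S k) {j : ℤ} (h0 : k 0 ≤ j) (hS : j < S) :
    ∃ i : ℕ, 1 ≤ i ∧ i ≤ N ∧ k (i - 1) ≤ j ∧ j < k i := by
  classical
  have hex : ∃ i, j < k i ∧ i ≤ N := ⟨N, hk.2.2 ▸ hS, le_rfl⟩
  obtain ⟨hlt, hle⟩ := Nat.find_spec hex
  have hpos : 1 ≤ Nat.find hex := Nat.one_le_iff_ne_zero.2 fun h => by rw [h] at hlt; omega
  have hmin := Nat.find_min hex (m := Nat.find hex - 1) (by omega)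
  exact ⟨Nat.find hex, hpos, hle, not_lt.1 fun h => hmin ⟨h, by omega⟩, hlt⟩

end IsPolicy

section Khat

variable {N : ℕ} {S : ℤ}

theorem khat_zero (hN : 1 ≤ N) : khat N S 0 = 0 := by
  simp [khat, show 0 ≠ N by omega]

theorem khat_isPolicy (hN : 1 ≤ N) (hS : (N : ℤ) ≤ S) : IsPolicy N S (khat N S) := by
  refine ⟨(khat_zero hN).ge, fun i h1 h2 => ?_, if_pos rfl⟩
  unfold khat
  split_ifs <;> omega

/-- Any policy runs at most `min (j + 1) N` front-room servers in state `j + 1`, and `K̂` runs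
exactly that many. -/
theorem le_of_lt_khat {i i' : ℕ} {j : ℤ} (hiN : i ≤ N) (hij : i ≤ j + 1) (hj : j < khat N S i') :
    i ≤ i' := by
  unfold khat at hj
  split_ifs at hj <;> omega

end Khat

theorem Xcoef_pos (k : ℕ → ℤ) (i : ℕ) : 0 < Xcoef k i :=
  prod_pos fun _ hg => zpow_pos (one_div_pos.2 (Nat.cast_pos.2 (mem_Icc.1 hg).1)) _

theorem Xcoef_succ (k : ℕ → ℤ) (i : ℕ) :
    Xcoef k (i + 2) = Xcoef k (i + 1) * ((1 : ℝ) / ((i + 1 : ℕ) : ℝ)) ^ (k (i + 1) - k i) := by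
  simp only [Xcoef, Nat.add_sub_cancel, show i + 2 - 1 = i + 1 by omega,
    prod_Icc_succ_top (by omega : 1 ≤ i + 1)]

namespace IsBeta

variable {lam mu : ℝ} {N : ℕ} {S : ℤ} {k : ℕ → ℤ} {β : ℤ → ℝ}

theorem eq_of_mem_Icc (hk : IsPolicy N S k) (hβ : IsBeta lam mu N k β) {i : ℕ} (hi : 1 ≤ i)
    (hiN : i ≤ N) {j : ℤ} (hj₁ : k (i - 1) ≤ j) (hj₂ : j ≤ k i) :
    β j = (lam / mu) ^ (j - k 0) * ((1 : ℝ) / (i : ℝ)) ^ (j - k (i - 1)) * Xcoef k i := by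
  rcases hj₁.lt_or_eq with hlt | rfl
  · exact hβ.2 i hi hiN j hlt hj₂
  obtain rfl | ⟨i, rfl⟩ : i = 1 ∨ ∃ i', i = i' + 2 := by
    rcases Nat.lt_or_ge i 2 with h | h
    · exact .inl (by omega)
    · exact .inr ⟨i - 2, by omega⟩
  · simp [hβ.1, Xcoef]
  · have hgap := hk.2.1 (i + 1) (by omega) (by omega)
    simp only [Nat.add_sub_cancel] at hgap
    have hβtop := hβ.2 (i + 1) (by omega) (by omega) (k (i + 1))
      (by simp only [Nat.add_sub_cancel]; omega) le_rfl
    simp only [show i + 2 - 1 = i + 1 by omega, Nat.add_sub_cancel] at hβtop ⊢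
    rw [hβtop, Xcoef_succ]
    simp only [sub_self, zpow_zero, mul_one]
    push_cast
    ring

theorem pos (hlam : 0 < lam) (hmu : 0 < mu) (hk : IsPolicy N S k) (hβ : IsBeta lam mu N k β)
    {j : ℤ} (hj₀ : k 0 ≤ j) (hjS : j ≤ S) : 0 < β j := by
  rcases hj₀.lt_or_eq with hlt | rfl
  · obtain ⟨i, hi, hiN, hj₁, hj₂⟩ := hk.exists_block (j := j - 1) (by omega) (by omega)
    rw [hβ.2 i hi hiN j (by omega) (by omega)]
    have := Xcoef_pos k i
    have : (0 : ℝ) < i := by exact_mod_cast hi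
    positivity
  · rw [hβ.1]; exact one_pos

theorem sum_pos (hlam : 0 < lam) (hmu : 0 < mu) (hk : IsPolicy N S k)
    (hβ : IsBeta lam mu N k β) {s : Finset ℤ} (hs : s ⊆ Icc (k 0) S) (hne : s.Nonempty) :
    0 < ∑ j ∈ s, β j :=
  Finset.sum_pos (fun _ hj => have hj := mem_Icc.1 (hs hj); hβ.pos hlam hmu hk hj.1 hj.2) hne

theorem mul_succ (hlam : 0 < lam) (hmu : 0 < mu) (hk : IsPolicy N S k)
    (hβ : IsBeta lam mu N k β) {i : ℕ} (hi : 1 ≤ i) (hiN : i ≤ N) {j : ℤ}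
    (hj₁ : k (i - 1) ≤ j) (hj₂ : j < k i) : (i : ℝ) * β (j + 1) = lam / mu * β j := by
  have hi0 : (i : ℝ) ≠ 0 := by positivity
  rw [hβ.eq_of_mem_Icc hk hi hiN hj₁ hj₂.le, hβ.eq_of_mem_Icc hk hi hiN (by omega) hj₂,
    show j + 1 - k 0 = j - k 0 + 1 by ring, show j + 1 - k (i - 1) = j - k (i - 1) + 1 by ring,
    zpow_add_one₀ (div_pos hlam hmu).ne', zpow_add_one₀ (one_div_ne_zero hi0)]
  field_simp

end IsBeta

section Queue

variable {lam mu : ℝ} {N : ℕ} {S : ℤ} {k : ℕ → ℤ} {β : ℤ → ℝ}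

theorem one_sub_Pfun_top (hlam : 0 < lam) (hmu : 0 < mu) (hN : 1 ≤ N) (hk : IsPolicy N S k)
    (hβ : IsBeta lam mu N k β) :
    1 - Pfun S k β S = (∑ j ∈ Ico (k 0) S, β j) / ∑ j ∈ Icc (k 0) S, β j := by
  have hD := hβ.sum_pos hlam hmu hk subset_rfl (nonempty_Icc.2 (hk.lt_top hN).le)
  rw [Pfun, ← Ico_insert_right (hk.lt_top hN).le, sum_insert right_notMem_Ico] at *
  field_simp
  ring

theorem one_sub_Pfun_top_pos (hlam : 0 < lam) (hmu : 0 < mu) (hN : 1 ≤ N) (hk : IsPolicy N S k)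
    (hβ : IsBeta lam mu N k β) : 0 < 1 - Pfun S k β S := by
  have hS := hk.lt_top hN
  rw [one_sub_Pfun_top hlam hmu hN hk hβ]
  exact div_pos (hβ.sum_pos hlam hmu hk Ico_subset_Icc_self (nonempty_Ico.2 hS))
    (hβ.sum_pos hlam hmu hk subset_rfl (nonempty_Icc.2 hS.le))

theorem Fval_eq (hlam : 0 < lam) (hmu : 0 < mu) (hN : 1 ≤ N) (hk : IsPolicy N S k)
    (hβ : IsBeta lam mu N k β) : Fval N S k β = lam / mu * (1 - Pfun S k β S) := by
  have hblock : ∀ i ∈ Icc 1 N, ∑ j ∈ Icc (k (i - 1) + 1) (k i), (i : ℝ) * Pfun S k β j =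
      ∑ j ∈ Ico (k (i - 1)) (k i), lam / mu * β j / ∑ m ∈ Icc (k 0) S, β m := by
    intro i hi
    obtain ⟨hi1, hiN⟩ := mem_Icc.1 hi
    rw [sum_Icc_add_one_eq_sum_Ico]
    refine sum_congr rfl fun j hj => ?_
    obtain ⟨hj₁, hj₂⟩ := mem_Ico.1 hj
    rw [Pfun, ← mul_div_assoc, hβ.mul_succ hlam hmu hk hi1 hiN hj₁ hj₂]
  rw [Fval, sum_congr rfl hblock, sum_Ico_blocks k _ fun i h1 h2 => by
    linarith [hk.2.1 i h1 h2], hk.2.2, ← sum_div, ← mul_sum, mul_div_assoc,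
    one_sub_Pfun_top hlam hmu hN hk hβ]

variable {βh : ℤ → ℝ}

theorem mul_succ_le_of_khat (hlam : 0 < lam) (hmu : 0 < mu) (hN : 1 ≤ N) (hS : (N : ℤ) ≤ S)
    (hk : IsPolicy N S k) (hβ : IsBeta lam mu N k β) (hβh : IsBeta lam mu N (khat N S) βh)
    {j : ℤ} (hj₀ : k 0 ≤ j) (hjS : j < S) : β j * βh (j + 1) ≤ β (j + 1) * βh j := by
  have hkh := khat_isPolicy hN hS
  obtain ⟨i, hi, hiN, hj₁, hj₂⟩ := hk.exists_block hj₀ hjS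
  obtain ⟨i', hi', hi'N, hj₁', hj₂'⟩ :=
    hkh.exists_block (by rw [khat_zero hN]; linarith [hk.1]) hjS
  have hij : (i : ℤ) ≤ j + 1 := by
    have := hk.add_le (i := i - 1) (by omega)
    rw [Nat.cast_sub hi, Nat.cast_one] at this
    linarith [hk.1]
  have hii' : (i : ℝ) ≤ i' := by exact_mod_cast le_of_lt_khat hiN hij hj₂'
  have hdb := hβ.mul_succ hlam hmu hk hi hiN hj₁ hj₂
  have hdbh := hβh.mul_succ hlam hmu hkh hi' hi'N hj₁' hj₂'
  have hprod : 0 ≤ β (j + 1) * βh (j + 1) :=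
    (mul_pos (hβ.pos hlam hmu hk (by omega) (by omega))
      (hβh.pos hlam hmu hkh (by rw [khat_zero hN]; linarith [hk.1]) (by omega))).le
  refine le_of_mul_le_mul_left ?_ (div_pos hlam hmu)
  calc lam / mu * (β j * βh (j + 1)) = i * (β (j + 1) * βh (j + 1)) := by
        linear_combination -βh (j + 1) * hdb
    _ ≤ i' * (β (j + 1) * βh (j + 1)) := mul_le_mul_of_nonneg_right hii' hprod
    _ = lam / mu * (β (j + 1) * βh j) := by linear_combination β (j + 1) * hdbh

theorem monotoneOn_indicator_div_khat (hlam : 0 < lam) (hmu : 0 < mu) (hN : 1 ≤ N)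
    (hS : (N : ℤ) ≤ S) (hk : IsPolicy N S k) (hβ : IsBeta lam mu N k β)
    (hβh : IsBeta lam mu N (khat N S) βh) :
    MonotoneOn (fun j => (Icc (k 0) S : Set ℤ).indicator β j / βh j) (Icc 0 S : Set ℤ) := by
  simp only [coe_Icc]
  have hkh := khat_isPolicy hN hS
  have hβh_pos : ∀ {j}, 0 ≤ j → j ≤ S → 0 < βh j := fun h0 hjS =>
    hβh.pos hlam hmu hkh (by rw [khat_zero hN]; exact h0) hjS
  have hind_nonneg : ∀ j, 0 ≤ (Set.Icc (k 0) S).indicator β j :=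
    Set.indicator_nonneg fun _ hj => (hβ.pos hlam hmu hk hj.1 hj.2).le
  refine monotoneOn_of_le_succ Set.ordConnected_Icc fun j _ hj hj' => ?_
  rw [Order.succ_eq_add_one] at hj' ⊢
  obtain ⟨hj0, hjS⟩ := hj
  obtain ⟨-, hj'S⟩ := hj'
  by_cases hjk : j < k 0
  · rw [Set.indicator_of_notMem (by simp [hjk]), zero_div]
    exact div_nonneg (hind_nonneg _) (hβh_pos (by omega) hj'S).le
  · rw [Set.indicator_of_mem (by simp; omega), Set.indicator_of_mem (by simp; omega),
      div_le_div_iff₀ (hβh_pos hj0 hjS) (hβh_pos (by omega) hj'S)]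
    exact mul_succ_le_of_khat hlam hmu hN hS hk hβ hβh (by omega) (by omega)

theorem khat_mean_le (hlam : 0 < lam) (hmu : 0 < mu) (hN : 1 ≤ N) (hS : (N : ℤ) ≤ S)
    (hk : IsPolicy N S k) (hβ : IsBeta lam mu N k β) (hβh : IsBeta lam mu N (khat N S) βh)
    {f : ℤ → ℝ} (hf : MonotoneOn f (Icc 0 S : Set ℤ)) :
    (∑ j ∈ Icc (khat N S 0) S, f j * βh j) / ∑ j ∈ Icc (khat N S 0) S, βh j ≤
      (∑ j ∈ Icc (k 0) S, f j * β j) / ∑ j ∈ Icc (k 0) S, β j := by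
  have hkh := khat_isPolicy hN hS
  have hsub : Icc (k 0) S ⊆ Icc 0 S := Icc_subset_Icc_left hk.1
  rw [← sum_indicator_subset β hsub,
    ← sum_indicator_subset_of_eq_zero β (fun j x => f j * x) hsub fun _ => mul_zero _,
    khat_zero hN]
  refine sum_mul_div_sum_le_of_monotoneOn_div _ hf (fun j hj => ?_)
    (monotoneOn_indicator_div_khat hlam hmu hN hS hk hβ hβh) ?_
  · exact hβh.pos hlam hmu hkh (by rw [khat_zero hN]; exact (mem_Icc.1 hj).1) (mem_Icc.1 hj).2
  · rw [sum_indicator_subset β hsub]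
    exact hβ.sum_pos hlam hmu hk subset_rfl (nonempty_Icc.2 (hk.lt_top hN).le)

theorem Pfun_khat_top_le (hlam : 0 < lam) (hmu : 0 < mu) (hN : 1 ≤ N) (hS : (N : ℤ) ≤ S)
    (hk : IsPolicy N S k) (hβ : IsBeta lam mu N k β) (hβh : IsBeta lam mu N (khat N S) βh) :
    Pfun S (khat N S) βh S ≤ Pfun S k β S := by
  have hmean := khat_mean_le hlam hmu hN hS hk hβ hβh (f := fun j => if j = S then 1 else 0)
    fun j hj m hm hjm => by
      simp only [coe_Icc, Set.mem_Icc] at hj hm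
      dsimp only
      split_ifs <;> first | omega | norm_num
  have hS0 : (0 : ℤ) ≤ S := by omega
  simpa only [Pfun, khat_zero hN, ite_mul, one_mul, zero_mul, sum_ite_eq', mem_Icc, le_rfl,
    and_true, (hk.lt_top hN).le, hS0, if_true] using hmean

theorem Lval_eq :
    Lval S k β = (∑ j ∈ Icc (k 0) S, (j : ℝ) * β j) / ∑ j ∈ Icc (k 0) S, β j := by
  simp only [Lval, Pfun, mul_div_assoc, sum_div]

theorem Lval_nonneg (hlam : 0 < lam) (hmu : 0 < mu) (hk : IsPolicy N S k)
    (hβ : IsBeta lam mu N k β) : 0 ≤ Lval S k β :=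
  sum_nonneg fun j hj => by
    obtain ⟨hj₀, hjS⟩ := mem_Icc.1 hj
    have : (0 : ℝ) ≤ j := by exact_mod_cast hk.1.trans hj₀
    have := hβ.pos hlam hmu hk hj₀ hjS
    have := hβ.sum_pos hlam hmu hk subset_rfl ⟨j, hj⟩
    unfold Pfun
    positivity

theorem Lval_khat_le (hlam : 0 < lam) (hmu : 0 < mu) (hN : 1 ≤ N) (hS : (N : ℤ) ≤ S)
    (hk : IsPolicy N S k) (hβ : IsBeta lam mu N k β) (hβh : IsBeta lam mu N (khat N S) βh) :
    Lval S (khat N S) βh ≤ Lval S k β := by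
  rw [Lval_eq, Lval_eq]
  exact khat_mean_le hlam hmu hN hS hk hβ hβh fun _ _ _ _ h => by exact_mod_cast h

end Queue

/-- `K̂` yields the smallest expected waiting time and back-room staffing and
the largest front-room staffing over all policies; in particular if it is
feasible (`B(K̂) ≥ B_l`) then it is optimal for the constrained problem. -/
theorem khat_optimal
    (lam mu : ℝ) (hlam : 0 < lam) (hmu : 0 < mu)
    (N : ℕ) (hN : 1 ≤ N) (S : ℤ) (hS : (N : ℤ) ≤ S)
    (βh : ℤ → ℝ) (hβh : IsBeta lam mu N (khat N S) βh) (Bl : ℝ) :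
    (∀ (k : ℕ → ℤ) (β : ℤ → ℝ), IsPolicy N S k → IsBeta lam mu N k β →
      Wq lam mu S (khat N S) βh ≤ Wq lam mu S k β ∧
      Fval N S k β ≤ Fval N S (khat N S) βh ∧
      Bval N S (khat N S) βh ≤ Bval N S k β) ∧
    (Bl ≤ Bval N S (khat N S) βh →
      ∀ (k : ℕ → ℤ) (β : ℤ → ℝ), IsPolicy N S k → IsBeta lam mu N k β →
        Bl ≤ Bval N S k β →
        Wq lam mu S (khat N S) βh ≤ Wq lam mu S k β) := by
  have hkh := khat_isPolicy hN hS
  have hoptimal : ∀ (k : ℕ → ℤ) (β : ℤ → ℝ), IsPolicy N S k → IsBeta lam mu N k β →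
      Wq lam mu S (khat N S) βh ≤ Wq lam mu S k β ∧
      Fval N S k β ≤ Fval N S (khat N S) βh ∧
      Bval N S (khat N S) βh ≤ Bval N S k β := by
    intro k β hk hβ
    have hP := Pfun_khat_top_le hlam hmu hN hS hk hβ hβh
    have hF : Fval N S k β ≤ Fval N S (khat N S) βh := by
      rw [Fval_eq hlam hmu hN hk hβ, Fval_eq hlam hmu hN hkh hβh]
      gcongr
    refine ⟨?_, hF, sub_le_sub_left hF _⟩
    have hpos := one_sub_Pfun_top_pos hlam hmu hN hk hβ
    exact sub_le_sub_right (div_le_div₀ (Lval_nonneg hlam hmu hk hβ)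
      (Lval_khat_le hlam hmu hN hS hk hβ hβh) (by positivity) (by gcongr)) _
  exact ⟨hoptimal, fun _ k β hk hβ _ => (hoptimal k β hk hβ).1⟩
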